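/- arXiv:2510.14826 — 5 statements merged into one kernel-verified Lean document; each statement's English description precedes it below -/
import Mathlib

section
/- Let X be a type, Y a nonempty type, f : X → Y, let w : X → ℝ≥0∞ satisfy Σ_x w(x) < ∞, and let q be a probability mass function on Y. Then there exists y₀ ∈ Y such that Σ_x w(x) · q(f(x)) ≤ Σ_{x : f(x) = y₀} w(x). -/
open scoped ENNReal Classical

/-- For `w : X → ℝ≥0∞` with finite total mass and a PMF `q` on a nonempty type `Y`,
there exists `y₀ : Y` such that `∑_x w x * q (f x) ≤ ∑_{x : f x = y₀} w x`. -/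
theorem exists_maximal_output {X Y : Type*} [Nonempty Y] (f : X → Y) (w : X → ℝ≥0∞)
    (hw : (∑' x, w x) ≠ ⊤) (q : PMF Y) :
    ∃ y₀ : Y, (∑' x, w x * q (f x)) ≤ ∑' x, if f x = y₀ then w x else 0 := by
  classical
  set W : Y → ℝ≥0∞ := fun y => ∑' x, if f x = y then w x else 0 with hW
  set S : ℝ≥0∞ := ∑' x, w x * q (f x) with hS
  have hSle : S ≤ ∑' x, w x := by
    apply ENNReal.tsum_le_tsum
    intro x
    calc w x * q (f x) ≤ w x * 1 := by gcongr; exact q.coe_le_one _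
      _ = w x := mul_one _
  have hSfin : S ≠ ⊤ := (lt_of_le_of_lt hSle (lt_top_iff_ne_top.2 hw)).ne
  have hdecomp : S = ∑' y, q y * W y := by
    rw [hS]
    calc ∑' x, w x * q (f x) = ∑' x, ∑' y, if f x = y then w x * q y else 0 := by
          congr 1; funext x
          rw [tsum_eq_single (f x)]
          · simp
          · intro y hy; simp [Ne.symm hy]
      _ = ∑' y, ∑' x, if f x = y then w x * q y else 0 := ENNReal.tsum_comm
      _ = ∑' y, q y * W y := by
          congr 1; funext y
          rw [hW]
          simp only
          rw [← ENNReal.tsum_mul_left]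
          congr 1; funext x
          split <;> simp [mul_comm]
  by_contra h
  push_neg at h
  have hlt : ∀ y, W y < S := h
  have key : ∑' y, q y * S = ∑' y, (q y * W y + q y * (S - W y)) := by
    congr 1; funext y
    rw [← mul_add, add_tsub_cancel_of_le (hlt y).le]
  rw [ENNReal.tsum_add, ← hdecomp, ENNReal.tsum_mul_right, q.tsum_coe, one_mul] at key
  have hT : ∑' y, q y * (S - W y) = 0 := by
    have := key
    nth_rewrite 1 [← add_zero S] at this
    exact ((ENNReal.add_right_inj hSfin).mp this).symm
  obtain ⟨y₀, hy₀⟩ := q.support_nonempty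
  have h0 : q y₀ * (S - W y₀) = 0 := by
    by_contra hne
    have := ENNReal.tsum_eq_zero.mp hT y₀
    exact hne this
  have hq : q y₀ ≠ 0 := hy₀
  have : S - W y₀ = 0 := by
    rcases mul_eq_zero.mp h0 with h' | h'
    · exact absurd h' hq
    · exact h'
  exact absurd (tsub_eq_zero_iff_le.mp this) (not_le.mpr (hlt y₀))
end

section
/- Let D be a probability mass function on X, let f : X → Y, let S be a finite type, let U : X → PMF S and R : S → PMF Y. Then there exists a finite subset A ⊆ Y with |A| ≤ |S| such that the success probability Pr_{x∼D, y∼(U x).bind R}[y = f(x)], i.e., Σ_x D(x) · Σ_{s∈S} (U x)(s) · (R s)(f(x)), is at most Pr_{x∼D}[f(x) ∈ A]. -/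
/-!
Bounding the state distribution by the g state, `∑ s, U x s * R s y ≤ g y := max_s R s y`,
reduces the success probability to a fractional knapsack `∑ y, p y * g y` with `p` the law of
`f x`, weights `g ≤ 1` and total weight `∑ y, g y ≤ |S|`. Its optimum is attained on a set `A`
of `|S|` most likely outputs: with a threshold `m` separating `p` on `A` from `p` off `A`, pointwise
`p * g ≤ 𝟙_A (p - m) + m * g`, and summing gives at most `∑_{y ∈ A} p y`.
-/

open scoped ENNReal Classical

section Knapsack

variable {Y : Type*}

theorem ENNReal.exists_max_image_of_tsum_ne_top {p : Y → ℝ≥0∞} (hp : ∑' y, p y ≠ ∞)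
    {s : Set Y} (hs : s.Nonempty) : ∃ y ∈ s, ∀ z ∈ s, p z ≤ p y := by
  by_cases hpos : ∃ y ∈ s, p y ≠ 0
  · obtain ⟨y₁, hy₁s, hy₁⟩ := hpos
    have hfin : (s ∩ {z | p y₁ ≤ p z}).Finite :=
      (ENNReal.finite_const_le_of_tsum_ne_top hp hy₁).subset Set.inter_subset_right
    obtain ⟨y, ⟨hys, hy₁y⟩, hmax⟩ :=
      Set.exists_max_image _ p hfin ⟨y₁, hy₁s, le_refl (p y₁)⟩
    refine ⟨y, hys, fun z hz => ?_⟩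
    rcases le_total (p y₁) (p z) with h | h
    · exact hmax z ⟨hz, h⟩
    · exact h.trans hy₁y
  · push Not at hpos
    obtain ⟨y, hy⟩ := hs
    exact ⟨y, hy, fun z hz => (hpos z hz).trans_le zero_le⟩

theorem ENNReal.exists_finset_threshold {p : Y → ℝ≥0∞} (hp : ∑' y, p y ≠ ∞) (k : ℕ) :
    ∃ (A : Finset Y) (m : ℝ≥0∞), A.card ≤ k ∧ (∀ a ∈ A, m ≤ p a) ∧ (∀ y ∉ A, p y ≤ m) ∧
      (A.card = k ∨ m = 0) := by
  induction k with
  | zero => exact ⟨∅, ∞, le_rfl, by simp, fun _ _ => le_top, Or.inl rfl⟩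
  | succ k ih =>
    obtain ⟨A, m, hcard, hA, hAc, hk | rfl⟩ := ih
    · by_cases hfull : ∀ y, y ∈ A
      · exact ⟨A, 0, by omega, fun _ _ => zero_le, fun y hy => absurd (hfull y) hy,
          Or.inr rfl⟩
      push Not at hfull
      obtain ⟨y₀, hy₀, hmax⟩ :=
        ENNReal.exists_max_image_of_tsum_ne_top hp (s := {y | y ∉ A}) hfull
      refine ⟨insert y₀ A, p y₀, ?_, ?_, ?_, Or.inl ?_⟩
      · rw [Finset.card_insert_of_notMem hy₀]; omega
      · intro a ha
        rcases Finset.mem_insert.mp ha with rfl | ha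
        · exact le_rfl
        · exact (hAc y₀ hy₀).trans (hA a ha)
      · exact fun y hy => hmax y (fun h => hy (Finset.mem_insert_of_mem h))
      · rw [Finset.card_insert_of_notMem hy₀, hk]
    · exact ⟨A, 0, by omega, hA, hAc, Or.inr rfl⟩

theorem ENNReal.tsum_mul_le_sum_of_threshold {p g : Y → ℝ≥0∞} (hg : ∀ y, g y ≤ 1)
    {A : Finset Y} {m : ℝ≥0∞} (hA : ∀ a ∈ A, m ≤ p a) (hAc : ∀ y ∉ A, p y ≤ m)
    (hmass : m * ∑' y, g y ≤ m * A.card) :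
    ∑' y, p y * g y ≤ ∑ y ∈ A, p y := by
  have hpointwise : ∀ y, p y * g y ≤ (if y ∈ A then p y - m else 0) + m * g y := by
    intro y
    split_ifs with hy
    · calc p y * g y = (p y - m) * g y + m * g y := by
            rw [← add_mul, tsub_add_cancel_of_le (hA y hy)]
        _ ≤ p y - m + m * g y := by gcongr; exact mul_le_of_le_one_right' (hg y)
    · rw [zero_add]; exact mul_le_mul_left (hAc y hy) _
  calc ∑' y, p y * g y ≤ ∑' y, ((if y ∈ A then p y - m else 0) + m * g y) :=
        ENNReal.tsum_le_tsum hpointwise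
    _ = ∑ y ∈ A, (p y - m) + m * ∑' y, g y := by
        rw [ENNReal.tsum_add, ENNReal.tsum_mul_left, tsum_eq_sum (s := A) (fun y hy => if_neg hy),
          Finset.sum_congr rfl fun y hy => if_pos hy]
    _ ≤ ∑ y ∈ A, (p y - m) + ∑ _y ∈ A, m := by
        gcongr; simpa [mul_comm] using hmass
    _ = ∑ y ∈ A, p y := by
        rw [← Finset.sum_add_distrib]
        exact Finset.sum_congr rfl fun y hy => tsub_add_cancel_of_le (hA y hy)

theorem ENNReal.exists_finset_card_le_tsum_mul_le {p g : Y → ℝ≥0∞} (hp : ∑' y, p y ≠ ∞)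
    (hg : ∀ y, g y ≤ 1) {k : ℕ} (hgk : ∑' y, g y ≤ k) :
    ∃ A : Finset Y, A.card ≤ k ∧ ∑' y, p y * g y ≤ ∑ y ∈ A, p y := by
  obtain ⟨A, m, hcard, hA, hAc, hk | rfl⟩ := ENNReal.exists_finset_threshold hp k
  · exact ⟨A, hcard, ENNReal.tsum_mul_le_sum_of_threshold hg hA hAc (by rw [hk]; gcongr)⟩
  · exact ⟨A, hcard, ENNReal.tsum_mul_le_sum_of_threshold hg hA hAc (by simp)⟩

end Knapsack

theorem PMF.tsum_map_mul {X Y : Type*} (D : PMF X) (f : X → Y) (g : Y → ℝ≥0∞) :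
    ∑' y, D.map f y * g y = ∑' x, D x * g (f x) := by
  simp_rw [PMF.map_apply, ← ENNReal.tsum_mul_right]
  rw [ENNReal.tsum_comm]
  refine tsum_congr fun x => ?_
  simp

theorem PMF.sum_map_finset {X Y : Type*} (D : PMF X) (f : X → Y) (A : Finset Y) :
    ∑ y ∈ A, D.map f y = ∑' x, if f x ∈ A then D x else 0 := by
  rw [← PMF.toOuterMeasure_apply_finset, PMF.toOuterMeasure_map_apply, PMF.toOuterMeasure_apply]
  simp only [Set.indicator_apply, Set.mem_preimage, Finset.mem_coe]

theorem PMF.sum_mul_le_sup {S : Type*} [Fintype S] (U : PMF S) (r : S → ℝ≥0∞) :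
    ∑ s, U s * r s ≤ Finset.univ.sup r := by
  calc ∑ s, U s * r s ≤ ∑ s, U s * Finset.univ.sup r :=
        Finset.sum_le_sum fun s _ => by gcongr; exact Finset.le_sup (Finset.mem_univ s)
    _ = Finset.univ.sup r := by
        rw [← Finset.sum_mul, ← tsum_fintype (L := .unconditional _), U.tsum_coe, one_mul]

theorem PMF.tsum_sup_le_card {S Y : Type*} [Fintype S] (R : S → PMF Y) :
    ∑' y, Finset.univ.sup (fun s => R s y) ≤ Fintype.card S := by
  calc ∑' y, Finset.univ.sup (fun s => R s y) ≤ ∑' y, ∑ s, R s y :=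
        ENNReal.tsum_le_tsum fun y => Finset.sup_le fun s hs =>
          Finset.single_le_sum (f := fun s => R s y) (fun _ _ => zero_le) hs
    _ = ∑ s, ∑' y, R s y := Summable.tsum_finsetSum fun _ _ => ENNReal.summable
    _ = Fintype.card S := by simp

/-- For any finite-state generation model `(S, U, R)` and any PMF `D` on inputs, there is a
finite set `A` of outputs with `|A| ≤ |S|` such that the success probability
`∑_x D x * ∑_{s ∈ S} (U x) s * (R s) (f x)` is at most `Pr_{x ∼ D}[f x ∈ A]`. -/
theorem finite_state_model_success_le_prob_mem_finset {X Y : Type*} (D : PMF X) (f : X → Y)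
    (S : Type*) [Fintype S] (U : X → PMF S) (R : S → PMF Y) :
    ∃ A : Finset Y, A.card ≤ Fintype.card S ∧
      (∑' x, D x * ∑ s, U x s * R s (f x)) ≤ ∑' x, if f x ∈ A then D x else 0 := by
  set g : Y → ℝ≥0∞ := fun y => Finset.univ.sup (fun s => R s y)
  obtain ⟨A, hcard, hA⟩ := ENNReal.exists_finset_card_le_tsum_mul_le (D.map f).tsum_coe_ne_top
    (g := g) (fun y => Finset.sup_le fun s _ => (R s).coe_le_one y) (PMF.tsum_sup_le_card R)
  refine ⟨A, hcard, ?_⟩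
  calc (∑' x, D x * ∑ s, U x s * R s (f x)) ≤ ∑' x, D x * g (f x) :=
        ENNReal.tsum_le_tsum fun x => by gcongr; exact (U x).sum_mul_le_sup _
    _ = ∑' y, D.map f y * g y := (D.tsum_map_mul f g).symm
    _ ≤ ∑ y ∈ A, D.map f y := hA
    _ = ∑' x, if f x ∈ A then D x else 0 := D.sum_map_finset f A
end

section
/- Let α ∈ (0,1), let f : X → Y, and let (D_n)_{n≥1} be a sequence of probability mass functions on X such that n ↦ supp_α((D_n).map f) is monotone nondecreasing and tends to infinity (a long-form generation task with coverage α). Let (S, U, R) be any finite-state generation model. Then there exists n₀ such that for every n ≥ n₀, Pr_{x∼D_n, y∼(U x).bind R}[y = f(x)] < α; equivalently, the error err_n := Pr_{x∼D_n, y∼(U x).bind R}[y ≠ f(x)] satisfies err_n ≥ 1 − α. -/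
open scoped ENNReal Classical

/-- The minimum support size of mass `α` for a probability mass function `P` on `Y`:
the least cardinality of a finite subset `A ⊆ Y` whose total `P`-mass is at least `α`. -/
noncomputable def minSupportSize {Y : Type*} (P : PMF Y) (α : ℝ≥0∞) : ℕ :=
  sInf {n : ℕ | ∃ A : Finset Y, A.card = n ∧ α ≤ ∑ y ∈ A, P y}

/-! Let `ν_s(y)` be the probability that the model is in state `s` while the target is `y`.
From state `s` the model answers `y` with probability `R s y` whatever the input, so its success
from `s` is `∑_y ν_s(y) R_s(y) ≤ max_y ν_s(y) = ν_s(y_s)`. Summing over `s`, the success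
probability is at most the target mass of the at most `|S|` answers `y_s`, which is `< α` once
the minimum support size exceeds `|S|`. The error is the complementary probability. -/

theorem ENNReal.exists_forall_le_of_tsum_ne_top {ι : Type*} [Nonempty ι] {ν : ι → ℝ≥0∞}
    (h : ∑' i, ν i ≠ ∞) : ∃ i₀, ∀ i, ν i ≤ ν i₀ := by
  by_cases hzero : ∀ i, ν i = 0
  · exact ⟨Classical.arbitrary ι, fun i => by simp [hzero]⟩
  obtain ⟨i₁, hi₁⟩ := not_forall.mp hzero
  -- only finitely many terms reach `ν i₁ > 0`, and the maximum is attained among them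
  have hfin := ENNReal.finite_const_le_of_tsum_ne_top h hi₁
  obtain ⟨i₀, hi₀, hmax⟩ := hfin.toFinset.exists_max_image ν ⟨i₁, by simp⟩
  refine ⟨i₀, fun i => ?_⟩
  by_cases hi : ν i₁ ≤ ν i
  · exact hmax i (by simpa using hi)
  · exact (not_le.mp hi).le.trans (by simpa using hi₀)

theorem PMF.tsum_mul_le_of_le {Y : Type*} (p : PMF Y) {g : Y → ℝ≥0∞} {c : ℝ≥0∞}
    (hg : ∀ y, g y ≤ c) : ∑' y, g y * p y ≤ c :=
  calc ∑' y, g y * p y ≤ ∑' y, c * p y := ENNReal.tsum_le_tsum fun y => by gcongr; exact hg y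
    _ = c := by rw [ENNReal.tsum_mul_left, p.tsum_coe, mul_one]

theorem exists_finset_card_le_sum_tsum_mul_le {S Y : Type*} [Fintype S] [Nonempty Y]
    (ν : S → Y → ℝ≥0∞) (hν : ∀ s, ∑' y, ν s y ≠ ∞) (R : S → PMF Y) :
    ∃ A : Finset Y, A.card ≤ Fintype.card S ∧
      ∑ s, ∑' y, ν s y * R s y ≤ ∑ y ∈ A, ∑ s, ν s y := by
  choose ys hys using fun s => ENNReal.exists_forall_le_of_tsum_ne_top (hν s)
  refine ⟨Finset.univ.image ys, Finset.card_image_le, ?_⟩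
  calc ∑ s, ∑' y, ν s y * R s y
      ≤ ∑ s, ν s (ys s) := Finset.sum_le_sum fun s _ => (R s).tsum_mul_le_of_le (hys s)
    _ ≤ ∑ s, ∑ y ∈ Finset.univ.image ys, ν s y := Finset.sum_le_sum fun s _ =>
        Finset.single_le_sum (fun _ _ => zero_le) (Finset.mem_image_of_mem ys (Finset.mem_univ s))
    _ = ∑ y ∈ Finset.univ.image ys, ∑ s, ν s y := Finset.sum_comm

theorem ENNReal.tsum_mul_comp_eq_tsum_fiber {X Y : Type*} (w : X → ℝ≥0∞) (f : X → Y)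
    (g : Y → ℝ≥0∞) :
    ∑' x, w x * g (f x) = ∑' y, (∑' x, if f x = y then w x else 0) * g y := by
  simp_rw [← ENNReal.tsum_mul_right, ite_mul, zero_mul]
  rw [ENNReal.tsum_comm]
  exact tsum_congr fun x => (tsum_ite_eq' (f x) fun y => w x * g y).symm

section FiniteStateModel

variable {X Y S : Type*} (D : PMF X) (f : X → Y) (U : X → PMF S)

noncomputable def stateOutputMass (s : S) (y : Y) : ℝ≥0∞ :=
  ∑' x, if f x = y then D x * U x s else 0

variable [Fintype S]

theorem sum_stateOutputMass (y : Y) : ∑ s, stateOutputMass D f U s y = (D.map f) y := by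
  simp only [stateOutputMass, PMF.map_apply]
  rw [← Summable.tsum_finsetSum fun _ _ => ENNReal.summable]
  refine tsum_congr fun x => ?_
  by_cases hx : f x = y
  · simp only [hx, if_true]
    rw [← Finset.mul_sum, ← tsum_fintype (L := .unconditional S), (U x).tsum_coe, mul_one]
  · simp [hx, Ne.symm hx]

theorem tsum_stateOutputMass_ne_top (s : S) : ∑' y, stateOutputMass D f U s y ≠ ∞ := by
  refine ne_top_of_le_ne_top ENNReal.one_ne_top ?_
  calc ∑' y, stateOutputMass D f U s y ≤ ∑' y, (D.map f) y :=
        ENNReal.tsum_le_tsum fun y => (Finset.single_le_sum (f := (stateOutputMass D f U · y))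
          (fun _ _ => zero_le) (Finset.mem_univ s)).trans_eq (sum_stateOutputMass D f U y)
    _ = 1 := (D.map f).tsum_coe

theorem tsum_mul_bind_apply_eq_sum_stateOutputMass (R : S → PMF Y) :
    ∑' x, D x * ((U x).bind R) (f x) = ∑ s, ∑' y, stateOutputMass D f U s y * R s y := by
  simp only [PMF.bind_apply, tsum_fintype, Finset.mul_sum, stateOutputMass]
  rw [Summable.tsum_finsetSum fun _ _ => ENNReal.summable]
  refine Finset.sum_congr rfl fun s _ => ?_
  simp_rw [← mul_assoc]
  exact ENNReal.tsum_mul_comp_eq_tsum_fiber (fun x => D x * U x s) f (R s)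

theorem exists_finset_card_le_tsum_mul_bind_apply_le [Nonempty Y] (R : S → PMF Y) :
    ∃ A : Finset Y, A.card ≤ Fintype.card S ∧
      ∑' x, D x * ((U x).bind R) (f x) ≤ ∑ y ∈ A, (D.map f) y := by
  obtain ⟨A, hcard, hle⟩ := exists_finset_card_le_sum_tsum_mul_le (stateOutputMass D f U)
    (tsum_stateOutputMass_ne_top D f U) R
  refine ⟨A, hcard, ?_⟩
  simpa only [tsum_mul_bind_apply_eq_sum_stateOutputMass, sum_stateOutputMass] using hle

end FiniteStateModel

theorem sum_lt_of_card_lt_minSupportSize {Y : Type*} {P : PMF Y} {α : ℝ≥0∞} {A : Finset Y}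
    (hA : A.card < minSupportSize P α) : ∑ y ∈ A, P y < α := by
  by_contra! h
  exact hA.not_ge (csInf_le (OrderBot.bddBelow _) ⟨A, rfl, h⟩)

theorem PMF.apply_add_tsum_ite_ne_eq_one {Y : Type*} (p : PMF Y) (b : Y) :
    p b + ∑' y, (if y ≠ b then p y else 0) = 1 := by
  simp_rw [ite_not]
  rw [← ENNReal.tsum_eq_add_tsum_ite b, p.tsum_coe]

theorem PMF.tsum_mul_apply_add_tsum_mul_tsum_ite_ne_eq_one {X Y : Type*} (D : PMF X) (f : X → Y)
    (q : X → PMF Y) :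
    ∑' x, D x * q x (f x) + ∑' x, D x * ∑' y, (if y ≠ f x then q x y else 0) = 1 := by
  simp_rw [← ENNReal.tsum_add, ← mul_add, PMF.apply_add_tsum_ite_ne_eq_one, mul_one, D.tsum_coe]

theorem finite_state_model_fails_long_form_general {X Y : Type*} (α : ℝ≥0∞)
    (f : X → Y) (D : ℕ → PMF X)
    (htends : Filter.Tendsto (fun n => minSupportSize ((D n).map f) α)
      Filter.atTop Filter.atTop)
    (S : Type*) [Fintype S] (U : X → PMF S) (R : S → PMF Y) :
    ∃ n₀ : ℕ, ∀ n ≥ n₀,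
      (∑' x, D n x * ((U x).bind R) (f x)) < α ∧
        1 - α ≤ ∑' x, D n x * ∑' y, if y ≠ f x then ((U x).bind R) y else 0 := by
  obtain ⟨n₀, hn₀⟩ := Filter.eventually_atTop.mp (htends.eventually_gt_atTop (Fintype.card S))
  refine ⟨n₀, fun n hn => ?_⟩
  have : Nonempty Y := ⟨f (D n).support_nonempty.choose⟩
  obtain ⟨A, hcard, hsucc⟩ := exists_finset_card_le_tsum_mul_bind_apply_le (D n) f U R
  have hlt := hsucc.trans_lt (sum_lt_of_card_lt_minSupportSize (hcard.trans_lt (hn₀ n hn)))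
  refine ⟨hlt, ?_⟩
  rw [tsub_le_iff_right,
    ← (D n).tsum_mul_apply_add_tsum_mul_tsum_ite_ne_eq_one f fun x => (U x).bind R, add_comm]
  gcongr

/-- Theorem 1: on a long-form generation task with coverage `α` (the minimum support size of
the pushforward distributions is nondecreasing and tends to infinity), every finite-state
generation model `(S, U, R)` has success probability `< α`, i.e. error `≥ 1 - α`, for all
sufficiently large complexities `n`. -/
theorem finite_state_model_fails_long_form {X Y : Type*} (α : ℝ≥0∞)
    (hα : α ∈ Set.Ioo (0 : ℝ≥0∞) 1) (f : X → Y) (D : ℕ → PMF X)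
    (hmono : Monotone fun n => minSupportSize ((D n).map f) α)
    (htends : Filter.Tendsto (fun n => minSupportSize ((D n).map f) α)
      Filter.atTop Filter.atTop)
    (S : Type*) [Fintype S] (U : X → PMF S) (R : S → PMF Y) :
    ∃ n₀ : ℕ, ∀ n ≥ n₀,
      (∑' x, D n x * ((U x).bind R) (f x)) < α ∧
        1 - α ≤ ∑' x, D n x * ∑' y, if y ≠ f x then ((U x).bind R) y else 0 :=
  finite_state_model_fails_long_form_general α f D htends S U R
end

section
/- Let α ∈ (0,1), let f : X → Y, and let (D_n)_{n≥1} be a sequence of probability mass functions on X such that n ↦ supp_α((D_n).map f) is monotone nondecreasing and tends to infinity (a long-form generation task with coverage α). Then for every ε ∈ (0, 1−α), there do not exist a finite-state generation model (S, U, R) and an index n₀ such that err_n := Pr_{x∼D_n, y∼(U x).bind R}[y ≠ f(x)] ≤ ε for all n ≥ n₀. In particular, no procedure whose output hypotheses are finite-state generation models can achieve length generalization with error parameter ε < 1 − α on such a task. -/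
open scoped ENNReal Classical

/-!
A finite-state model can only put large probability on few outputs: the function
`y ↦ ∑ s, R s y` has total mass `|S|`, so for any threshold `c > 0` the set `A` of outputs
where it reaches `c` is finite, and every input whose correct answer lies outside `A` is
answered wrongly with probability more than `1 - c`. If the error stays below `ε < 1 - α`,
Markov's inequality (with `c` close enough to `0`) forces `f` to put mass at least `α` on `A`
under every `D n` with `n ≥ n₀`, so the minimum support size stays bounded by `|A|`.
-/

open Filter

namespace PMF

variable {α σ : Type*}

theorem toOuterMeasure_add_toOuterMeasure_compl (p : PMF α) (s : Set α) :
    p.toOuterMeasure s + p.toOuterMeasure sᶜ = 1 := by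
  rw [toOuterMeasure_apply, toOuterMeasure_apply, ← ENNReal.tsum_add, ← p.tsum_coe]
  exact tsum_congr fun x => s.indicator_self_add_compl_apply p x

theorem tsum_ite_ne_eq_one_sub (p : PMF α) (a : α) :
    (∑' x, if x ≠ a then p x else 0) = 1 - p a := by
  rw [← p.toOuterMeasure_add_toOuterMeasure_compl {a}, toOuterMeasure_apply_singleton,
    ENNReal.add_sub_cancel_left (p.apply_ne_top a), toOuterMeasure_apply]
  exact tsum_congr fun x => by simp [Set.indicator_apply]

theorem bind_apply_le_tsum (p : PMF σ) (R : σ → PMF α) (a : α) :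
    p.bind R a ≤ ∑' s, R s a :=
  ENNReal.tsum_le_tsum fun s => mul_le_of_le_one_left' (p.coe_le_one s)

theorem mul_toOuterMeasure_le_tsum_mul (p : PMF α) {s : Set α} {u : ℝ≥0∞}
    {e : α → ℝ≥0∞} (h : ∀ x ∈ s, u ≤ e x) :
    u * p.toOuterMeasure s ≤ ∑' x, p x * e x := by
  rw [toOuterMeasure_apply, ← ENNReal.tsum_mul_left]
  refine ENNReal.tsum_le_tsum fun x => ?_
  by_cases hx : x ∈ s
  · simpa [hx, mul_comm] using mul_le_mul_right (h x hx) (p x)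
  · simp [hx]

end PMF

theorem minSupportSize_le_card {Y : Type*} {P : PMF Y} {α : ℝ≥0∞} {A : Finset Y}
    (h : α ≤ ∑ y ∈ A, P y) : minSupportSize P α ≤ A.card :=
  Nat.sInf_le ⟨A, rfl, h⟩

theorem finite_setOf_le_sum_apply {σ Y : Type*} [Fintype σ] (R : σ → PMF Y) {c : ℝ≥0∞}
    (hc : c ≠ 0) : {y | c ≤ ∑ s, R s y}.Finite := by
  refine ENNReal.finite_const_le_of_tsum_ne_top ?_ hc
  rw [Summable.tsum_finsetSum fun s _ => ENNReal.summable]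
  simp

theorem exists_finset_one_sub_le_sum_map_of_error_le {X Y S : Type*} [Fintype S]
    (R : S → PMF Y) {ε β : ℝ≥0∞} (hεβ : ε < β) :
    ∃ A : Finset Y, ∀ (D : PMF X) (f : X → Y) (U : X → PMF S),
      (∑' x, D x * ∑' y, if y ≠ f x then ((U x).bind R) y else 0) ≤ ε →
        1 - β ≤ ∑ y ∈ A, D.map f y := by
  have hdiv {u : ℝ≥0∞} : ε / β < u ↔ ε < u * β :=
    ENNReal.div_lt_iff (.inl hεβ.ne_bot) (.inr hεβ.ne_top)
  -- an answer of total weight `< 1 - u` is missed with probability `≥ u`, and `u * β > ε`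
  obtain ⟨u, hεu, hu1⟩ := exists_between ((hdiv (u := 1)).2 (by simpa using hεβ))
  have hA := finite_setOf_le_sum_apply R (tsub_pos_of_lt hu1).ne'
  refine ⟨hA.toFinset, fun D f U herr => ?_⟩
  set A := hA.toFinset
  have hmiss : ∀ x ∈ f ⁻¹' (↑A)ᶜ,
      u ≤ ∑' y, if y ≠ f x then ((U x).bind R) y else 0 := by
    intro x hx
    have hlt : (U x).bind R (f x) + u < 1 := by
      refine (add_le_add ((U x).bind_apply_le_tsum R (f x)) le_rfl).trans_lt ?_
      simpa [A, tsum_fintype] using hx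
    rw [PMF.tsum_ite_ne_eq_one_sub]
    exact ENNReal.le_sub_of_add_le_left (PMF.apply_ne_top _ _) hlt.le
  have hmarkov : u * (D.map f).toOuterMeasure (↑A)ᶜ ≤ ε := by
    rw [PMF.toOuterMeasure_map_apply]
    exact (D.mul_toOuterMeasure_le_tsum_mul hmiss).trans herr
  have hcompl : (D.map f).toOuterMeasure (↑A)ᶜ < β := by
    by_contra! hβ
    exact ((hdiv.1 hεu).trans_le (by gcongr)).not_ge hmarkov
  rw [← PMF.toOuterMeasure_apply_finset, tsub_le_iff_right]
  calc 1 = (D.map f).toOuterMeasure ↑A + (D.map f).toOuterMeasure (↑A)ᶜ :=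
        ((D.map f).toOuterMeasure_add_toOuterMeasure_compl _).symm
    _ ≤ _ := by gcongr

theorem no_length_generalization_of_finite_state_models_general {X Y : Type*} (α : ℝ≥0∞)
    (f : X → Y) (D : ℕ → PMF X)
    (htends : Filter.Tendsto (fun n => minSupportSize ((D n).map f) α)
      Filter.atTop Filter.atTop)
    (ε : ℝ≥0∞) (hε' : ε < 1 - α) :
    ¬ ∃ (S : Type) (_ : Fintype S) (U : X → PMF S) (R : S → PMF Y) (n₀ : ℕ),
        ∀ n ≥ n₀,
          (∑' x, D n x * ∑' y, if y ≠ f x then ((U x).bind R) y else 0) ≤ ε := by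
  rintro ⟨S, _, U, R, n₀, herr⟩
  have hα : α ≤ 1 := (tsub_pos_iff_lt.1 (pos_of_gt hε')).le
  obtain ⟨A, hA⟩ := exists_finset_one_sub_le_sum_map_of_error_le (X := X) R hε'
  rw [ENNReal.sub_sub_cancel ENNReal.one_ne_top hα] at hA
  obtain ⟨n, hn₀, hn⟩ :=
    ((eventually_ge_atTop n₀).and (htends.eventually_gt_atTop A.card)).exists
  exact (minSupportSize_le_card (hA (D n) f U (herr n hn₀))).not_gt hn

/-- On a long-form generation task with coverage `α`, for any `ε ∈ (0, 1 - α)` there is no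
finite-state generation model `(S, U, R)` and index `n₀` whose error
`Pr_{x ∼ D_n, y ∼ (U x).bind R}[y ≠ f x]` is at most `ε` for all `n ≥ n₀`; in particular no
learner outputting finite-state generation models achieves length generalization with error
parameter `ε < 1 - α`. -/
theorem no_length_generalization_of_finite_state_models {X Y : Type*} (α : ℝ≥0∞)
    (hα : α ∈ Set.Ioo (0 : ℝ≥0∞) 1) (f : X → Y) (D : ℕ → PMF X)
    (hmono : Monotone fun n => minSupportSize ((D n).map f) α)
    (htends : Filter.Tendsto (fun n => minSupportSize ((D n).map f) α)
      Filter.atTop Filter.atTop)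
    (ε : ℝ≥0∞) (hε : 0 < ε) (hε' : ε < 1 - α) :
    ¬ ∃ (S : Type) (_ : Fintype S) (U : X → PMF S) (R : S → PMF Y) (n₀ : ℕ),
        ∀ n ≥ n₀,
          (∑' x, D n x * ∑' y, if y ≠ f x then ((U x).bind R) y else 0) ≤ ε :=
  no_length_generalization_of_finite_state_models_general α f D htends ε hε'
end

section
/- Let T be a finite type, let X be a type, let A : X → Finset T, and let (D_n)_{n≥1} be a sequence of probability mass functions on X. For every ε, δ ∈ (0,1) there exist n₀ ∈ ℕ and m ∈ ℕ such that, drawing m independent samples from each of D_1, …, D_{n₀} (independently across distributions) and letting Â ⊆ T be the union of A(x) over all drawn samples x, with probability at least 1 − δ the following holds: for every n ≥ n₀, Pr_{x∼D_n}[A(x) ⊆ Â] > 1 − ε. -/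
/-!
Fix `c > 0` with `|T| c < ε` and call a symbol `t` persistent if `Pr_{D_n}[t ∈ A x] ≥ c` for
infinitely many `n`. One sample from each of `D_1, …, D_{n₀}` misses a persistent symbol with
probability `∏ᵢ (1 - Pr_{D_i}[t ∈ A x])`, which tends to `0` as `n₀ → ∞`; so for large `n₀` all
persistent symbols are covered with probability `≥ 1 - δ`. Every other symbol eventually has
probability `< c`, so once they are covered the union bound gives
`Pr_{D_n}[A x ⊄ Â] ≤ |T| c < ε` for every `n ≥ n₀`. Hence `m = 1` sample per distribution suffices.
-/

open scoped ENNReal Classical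

open Filter Topology Finset

namespace ENNReal

theorem tsum_pi_prod {ι α : Type*} [Fintype ι] (f : ι → α → ℝ≥0∞) :
    ∑' x : ι → α, ∏ i, f i (x i) = ∏ i, ∑' a, f i a := by
  refine Fintype.induction_empty_option
    (P := fun ι _ => ∀ f : ι → α → ℝ≥0∞, ∑' x : ι → α, ∏ i, f i (x i) = ∏ i, ∑' a, f i a)
    ?_ ?_ ?_ ι f
  · intro ι κ _ e ih f
    let := Fintype.ofEquiv κ e.symm
    rw [← (e.arrowCongr (Equiv.refl α)).tsum_eq, ← e.prod_comp, ← ih]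
    refine tsum_congr fun x => (e.prod_comp _).symm.trans ?_
    simp [Equiv.arrowCongr]
  · simp
  · intro ι _ ih f
    rw [← Equiv.piOptionEquivProd.symm.tsum_eq, ENNReal.tsum_prod', Fintype.prod_option]
    simp only [Equiv.piOptionEquivProd, Equiv.coe_fn_symm_mk, Fintype.prod_option]
    simp_rw [ENNReal.tsum_mul_left, ih, ENNReal.tsum_mul_right]

theorem prod_range_one_sub_le_pow_count (f : ℕ → ℝ≥0∞) (c : ℝ≥0∞) (n : ℕ) :
    ∏ i ∈ range n, (1 - f i) ≤ (1 - c) ^ Nat.count (fun i => c ≤ f i) n := by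
  induction n with
  | zero => simp
  | succ n ih =>
    rw [prod_range_succ, Nat.count_succ, pow_add]
    refine mul_le_mul' ih ?_
    split_ifs with h
    · simpa using tsub_le_tsub_left h 1
    · simp

theorem tendsto_prod_range_one_sub_of_frequently {f : ℕ → ℝ≥0∞} {c : ℝ≥0∞} (hc : c ≠ 0)
    (hf : ∃ᶠ i in atTop, c ≤ f i) :
    Tendsto (fun n => ∏ i ∈ range n, (1 - f i)) atTop (𝓝 0) := by
  have hcount : Tendsto (Nat.count fun i => c ≤ f i) atTop atTop := by
    refine tendsto_atTop_atTop.2 fun k => ⟨Nat.nth (fun i => c ≤ f i) k, fun n hn => ?_⟩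
    rw [← Nat.count_nth_of_infinite (Nat.frequently_atTop_iff_infinite.1 hf) k]
    exact Nat.count_monotone _ hn
  have hpow : Tendsto (fun n => (1 - c) ^ Nat.count (fun i => c ≤ f i) n) atTop (𝓝 0) :=
    (ENNReal.tendsto_pow_atTop_nhds_zero_iff.2
      (ENNReal.sub_lt_self one_ne_top one_ne_zero hc)).comp hcount
  exact tendsto_of_tendsto_of_tendsto_of_le_of_le tendsto_const_nhds hpow (fun _ => zero_le)
    (prod_range_one_sub_le_pow_count f c)

end ENNReal

namespace PMF

variable {α : Type*}

theorem tsum_ite_eq_toOuterMeasure (p : PMF α) (P : α → Prop) [DecidablePred P] :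
    ∑' x, (if P x then p x else 0) = p.toOuterMeasure {x | P x} := by
  simp [toOuterMeasure_apply, Set.indicator_apply]

theorem toOuterMeasure_compl (p : PMF α) (s : Set α) :
    p.toOuterMeasure sᶜ = 1 - p.toOuterMeasure s := by
  rw [toOuterMeasure_apply, toOuterMeasure_apply]
  refine ENNReal.eq_sub_of_add_eq (p.tsum_coe_indicator_ne_top s) ?_
  rw [add_comm, ← ENNReal.tsum_add, ← Pi.add_def, Set.indicator_self_add_compl, p.tsum_coe]

theorem ofReal_one_sub_le_toOuterMeasure (p : PMF α) (s : Set α) {δ : ℝ} (hδ : 0 ≤ δ)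
    (h : p.toOuterMeasure sᶜ ≤ ENNReal.ofReal δ) :
    ENNReal.ofReal (1 - δ) ≤ p.toOuterMeasure s := by
  rw [← compl_compl s, toOuterMeasure_compl, ENNReal.ofReal_sub _ hδ, ENNReal.ofReal_one]
  exact tsub_le_tsub_left h 1

theorem ofReal_one_sub_lt_toOuterMeasure (p : PMF α) (s : Set α) {ε : ℝ} (hε : ε ≤ 1)
    (h : p.toOuterMeasure sᶜ < ENNReal.ofReal ε) :
    ENNReal.ofReal (1 - ε) < p.toOuterMeasure s := by
  have hε0 : 0 ≤ ε := (ENNReal.ofReal_pos.1 (pos_of_gt h)).le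
  rw [← compl_compl s, toOuterMeasure_compl, ENNReal.ofReal_sub _ hε0, ENNReal.ofReal_one]
  exact ((ENNReal.cancel_of_ne ENNReal.one_ne_top).tsub_lt_tsub_iff_left_of_le
    (ENNReal.cancel_of_ne ENNReal.ofReal_ne_top) (ENNReal.ofReal_le_one.2 hε)).2 h

noncomputable def pi {ι : Type*} [Fintype ι] (μ : ι → PMF α) : PMF (ι → α) :=
  ⟨fun x => ∏ i, μ i (x i), ENNReal.summable.hasSum_iff.2 <| by simp [ENNReal.tsum_pi_prod]⟩

theorem pi_apply {ι : Type*} [Fintype ι] (μ : ι → PMF α) (x : ι → α) :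
    pi μ x = ∏ i, μ i (x i) := rfl

theorem toOuterMeasure_pi_univ_pi {ι : Type*} [Fintype ι] (μ : ι → PMF α) (s : ι → Set α) :
    (pi μ).toOuterMeasure (Set.univ.pi s) = ∏ i, (μ i).toOuterMeasure (s i) := by
  simp only [toOuterMeasure_apply, ← ENNReal.tsum_pi_prod]
  refine tsum_congr fun x => ?_
  simp [Set.indicator_apply, pi_apply, Finset.prod_ite_zero]

end PMF


namespace PMF

variable {X T : Type*}

theorem toOuterMeasure_not_subset_le [Fintype T] (μ : PMF X) (A : X → Finset T) (B : Finset T)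
    {c : ℝ≥0∞} (hc : ∀ t ∉ B, μ.toOuterMeasure {x | t ∈ A x} ≤ c) :
    μ.toOuterMeasure {x | ¬ A x ⊆ B} ≤ Fintype.card T * c :=
  calc μ.toOuterMeasure {x | ¬ A x ⊆ B}
      ≤ μ.toOuterMeasure (⋃ t ∈ Bᶜ, {x | t ∈ A x}) :=
        MeasureTheory.measure_mono fun x hx => by
          obtain ⟨t, htA, htB⟩ := Finset.not_subset.1 hx
          exact Set.mem_biUnion (mem_compl.2 htB) htA
    _ ≤ ∑ t ∈ Bᶜ, μ.toOuterMeasure {x | t ∈ A x} := MeasureTheory.measure_biUnion_finset_le _ _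
    _ ≤ Bᶜ.card • c := sum_le_card_nsmul _ _ _ fun t ht => hc t (mem_compl.1 ht)
    _ ≤ Fintype.card T * c := by rw [nsmul_eq_mul]; gcongr; exact card_le_univ _

theorem toOuterMeasure_pi_pi_exists_not_mem_le {ι κ : Type*} [Fintype ι] [Fintype κ]
    [DecidableEq T] (ν : ι → κ → PMF X) (A : X → Finset T) (S : Finset T) :
    (pi fun i => pi (ν i)).toOuterMeasure
        {xs | ¬ ∀ t ∈ S, t ∈ univ.biUnion fun i => univ.biUnion fun j => A (xs i j)} ≤
      ∑ t ∈ S, ∏ i, ∏ j, (1 - (ν i j).toOuterMeasure {x | t ∈ A x}) := by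
  have huncovered (t : T) :
      {xs : ι → κ → X | t ∉ univ.biUnion fun i => univ.biUnion fun j => A (xs i j)} =
        Set.univ.pi fun _ => Set.univ.pi fun _ => {x | t ∈ A x}ᶜ := by
    ext; simp
  calc _ ≤ (pi fun i => pi (ν i)).toOuterMeasure
        (⋃ t ∈ S, {xs | t ∉ univ.biUnion fun i => univ.biUnion fun j => A (xs i j)}) :=
        MeasureTheory.measure_mono fun xs hxs => by simpa using hxs
    _ ≤ _ := MeasureTheory.measure_biUnion_finset_le _ _
    _ = _ := by simp_rw [huncovered, toOuterMeasure_pi_univ_pi, toOuterMeasure_compl]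

end PMF

theorem exists_forall_ge_lt_and_sum_prod_one_sub_lt {T : Type*} [Fintype T] (p : ℕ → T → ℝ≥0∞)
    {c δ : ℝ≥0∞} (hc : c ≠ 0) (hδ : δ ≠ 0) :
    ∃ n₀, (∀ t, ¬ (∃ᶠ n in atTop, c ≤ p n t) → ∀ n ≥ n₀, p n t < c) ∧
      ∑ t with ∃ᶠ n in atTop, c ≤ p n t, ∏ i ∈ range n₀, (1 - p (i + 1) t) < δ := by
  have hrare : ∀ᶠ n₀ in atTop, ∀ t, ¬ (∃ᶠ n in atTop, c ≤ p n t) → ∀ n ≥ n₀, p n t < c := by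
    refine eventually_all.2 fun t => ?_
    by_cases ht : ∃ᶠ n in atTop, c ≤ p n t
    · simp [ht]
    · refine (eventually_forall_ge_atTop.2 ?_).mono fun n₀ h _ => h
      exact (not_frequently.1 ht).mono fun n => lt_of_not_ge
  have hoften : Tendsto (fun n₀ => ∑ t with ∃ᶠ n in atTop, c ≤ p n t,
      ∏ i ∈ range n₀, (1 - p (i + 1) t)) atTop (𝓝 0) := by
    rw [← sum_const_zero]
    refine tendsto_finsetSum _ fun t ht => ENNReal.tendsto_prod_range_one_sub_of_frequently hc ?_
    have := (mem_filter.1 ht).2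
    rwa [← map_add_atTop_eq_nat 1, frequently_map] at this
  exact (hrare.and (hoften.eventually (gt_mem_nhds hδ.bot_lt))).exists

/-- Coverage lemma from the proof of Theorem 2: for every `ε, δ ∈ (0,1)` there are `n₀` and `m`
such that, drawing `m` independent samples from each of `D_1, …, D_{n₀}` and letting `Â` be the
union of the visited sets `A x` over all drawn samples `x`, with probability at least `1 - δ`
it holds that for every `n ≥ n₀`, `Pr_{x ∼ D_n}[A x ⊆ Â] > 1 - ε`. -/
theorem training_covers_visited_sets {T X : Type*} [Fintype T] [DecidableEq T]
    (A : X → Finset T) (D : ℕ → PMF X)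
    (ε δ : ℝ) (hε : ε ∈ Set.Ioo (0 : ℝ) 1) (hδ : δ ∈ Set.Ioo (0 : ℝ) 1) :
    ∃ n₀ m : ℕ,
      ENNReal.ofReal (1 - δ) ≤
        ∑' xs : Fin n₀ → Fin m → X,
          if ∀ n ≥ n₀, ENNReal.ofReal (1 - ε) <
              ∑' x, if A x ⊆ Finset.univ.biUnion
                  (fun i : Fin n₀ => Finset.univ.biUnion fun j : Fin m => A (xs i j))
                then D n x else 0
          then ∏ i, ∏ j, D (i.1 + 1) (xs i j) else 0 := by
  obtain ⟨c, hc0, hcε⟩ := ENNReal.exists_nnreal_pos_mul_lt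
    (ENNReal.natCast_ne_top (Fintype.card T)) (ENNReal.ofReal_pos.2 hε.1).ne'
  set p : ℕ → T → ℝ≥0∞ := fun n t => (D n).toOuterMeasure {x | t ∈ A x}
  obtain ⟨n₀, hrare, hoften⟩ := exists_forall_ge_lt_and_sum_prod_one_sub_lt p
    (c := c) (by simpa using hc0.ne') (ENNReal.ofReal_pos.2 hδ.1).ne'
  refine ⟨n₀, 1, ?_⟩
  set S : Finset T := {t | ∃ᶠ n in atTop, c ≤ p n t}
  have hsample (xs : Fin n₀ → Fin 1 → X) : ∏ i, ∏ j, D (i.1 + 1) (xs i j) =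
      PMF.pi (fun i : Fin n₀ => PMF.pi fun _ : Fin 1 => D (i + 1)) xs := rfl
  simp only [hsample, PMF.tsum_ite_eq_toOuterMeasure]
  refine le_trans ?_ (MeasureTheory.measure_mono (s := {xs | ∀ t ∈ S,
    t ∈ univ.biUnion fun i => univ.biUnion fun j => A (xs i j)}) fun xs hxs n hn => ?_)
  · refine PMF.ofReal_one_sub_le_toOuterMeasure _ _ hδ.1.le
      ((PMF.toOuterMeasure_pi_pi_exists_not_mem_le _ A S).trans (le_of_eq_of_le ?_ hoften.le))
    simp only [Fin.prod_univ_one]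
    exact sum_congr rfl fun t _ => Fin.prod_univ_eq_prod_range (fun i => 1 - p (i + 1) t) n₀
  · refine PMF.ofReal_one_sub_lt_toOuterMeasure _ _ hε.2.le
      ((PMF.toOuterMeasure_not_subset_le _ A _ fun t ht => ?_).trans_lt (by rwa [mul_comm]))
    exact (hrare t (fun htS => ht (hxs t (by simpa [S] using htS))) n hn).le
end
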